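/- In the braid group B_5, the word σ1 σ2⁻¹ σ3 σ4 σ1 σ2 σ2 σ3⁻¹ σ4 σ2 σ3 σ2⁻¹ (a braid representative of the knot 12n157) equals the product of the positive bands of its band decomposition with band centers {1, 3, 4, 5, 9, 10}; in particular, this braid is quasipositive. -/

import Mathlib

/-- The Artin relations for the braid group with `m` generators
`σ_1, …, σ_m` (indexed by `Fin m`), i.e. the braid group `B_{m+1}`:
`σ_i σ_j = σ_j σ_i` for `|i - j| ≥ 2`, and
`σ_i σ_{i+1} σ_i = σ_{i+1} σ_i σ_{i+1}`. -/
def braidRels (m : ℕ) : Set (FreeGroup (Fin m)) :=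
  { r | (∃ i j : Fin m, (i : ℕ) + 2 ≤ (j : ℕ) ∧
          r = FreeGroup.of i * FreeGroup.of j * (FreeGroup.of i)⁻¹ * (FreeGroup.of j)⁻¹) ∨
        (∃ i j : Fin m, (i : ℕ) + 1 = (j : ℕ) ∧
          r = FreeGroup.of i * FreeGroup.of j * FreeGroup.of i *
              (FreeGroup.of j)⁻¹ * (FreeGroup.of i)⁻¹ * (FreeGroup.of j)⁻¹) }

/-- The braid group `B_{m+1}`, presented with `m` Artin generators.
Here index `i : Fin m` corresponds to the Artin generator `σ_{i+1}`. -/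
abbrev BraidGrp (m : ℕ) := PresentedGroup (braidRels m)

/-- The Artin generator `σ_{i+1}` of the braid group `B_{m+1}`. -/
def σ {m : ℕ} (i : Fin m) : BraidGrp m := PresentedGroup.of i

/-- A letter of a braid word: a generator index together with a sign
(`true` = the positive generator, `false` = its inverse). -/
abbrev Letter (m : ℕ) := Fin m × Bool

/-- The group element represented by a letter. -/
def letterEl {m : ℕ} (x : Letter m) : BraidGrp m :=
  if x.2 then σ x.1 else (σ x.1)⁻¹

/-- The group element represented by a braid word. -/
def wordProd {m : ℕ} (w : List (Letter m)) : BraidGrp m :=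
  (w.map letterEl).prod

/-- The band of the band decomposition of the word `w` with band centers `S`
(1-based positions) at center `p`: namely `α_p * x_p * α_p⁻¹`, where `x_p` is
the letter of `w` at position `p` and `α_p` is the product, in increasing
order of position, of the letters of `w` at positions `q < p` with `q ∉ S`. -/
def band {m : ℕ} (w : List (Letter m)) (S : List ℕ) (p : ℕ) : BraidGrp m :=
  let α : BraidGrp m :=
    wordProd (((w.zipIdx.map Prod.swap).filter fun qx => decide (qx.1 + 1 < p ∧ qx.1 + 1 ∉ S)).map Prod.snd)
  match w[p - 1]? with
  | some x => α * letterEl x * α⁻¹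
  | none => 1

/-- The product, in increasing order of band center, of the bands of the
band decomposition of the word `w` with band centers `S`. -/
def bandProd {m : ℕ} (w : List (Letter m)) (S : List ℕ) : BraidGrp m :=
  (S.map (band w S)).prod

/-- A positive band in the braid group: a conjugate `α σ_j α⁻¹` of a generator. -/
def IsPositiveBand {m : ℕ} (x : BraidGrp m) : Prop :=
  ∃ (α : BraidGrp m) (j : Fin m), x = α * σ j * α⁻¹

/-- A braid is quasipositive if it is a product of positive bands. -/
def IsQuasipositive {m : ℕ} (x : BraidGrp m) : Prop :=
  ∃ l : List (BraidGrp m), (∀ b ∈ l, IsPositiveBand b) ∧ x = l.prod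

/-- A negative band in the braid group: a conjugate `α σ_j⁻¹ α⁻¹` of the
inverse of a generator. -/
def IsNegativeBand {m : ℕ} (x : BraidGrp m) : Prop :=
  ∃ (α : BraidGrp m) (j : Fin m), x = α * (σ j)⁻¹ * α⁻¹

/-- A braid is quasinegative if it is a product of negative bands. -/
def IsQuasinegative {m : ℕ} (x : BraidGrp m) : Prop :=
  ∃ l : List (BraidGrp m), (∀ b ∈ l, IsNegativeBand b) ∧ x = l.prod

/-- The braid word for the knot `12n157` (letter `(i, true)` is `σ_(i+1)`,
`(i, false)` is `σ_(i+1)⁻¹`). -/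
def theWord : List (Letter 4) :=
  [(0, true), (1, false), (2, true), (3, true), (0, true), (1, true), (1, true), (2, false), (3, true), (1, true), (2, true), (1, false)]

/-- The band centers. -/
def theCenters : List ℕ := [1, 3, 4, 5, 9, 10]

/-! Consecutive band conjugators differ by the non-center letters between the two centers,
`α_{p_{i+1}} = α_{p_i} · x_{p_i + 1} ⋯ x_{p_{i+1} - 1}`, so the product of the bands telescopes:
`b_{p₁} ⋯ b_{p_k} · α = w`, where `α` is the product of all non-center letters. Hence `w` is the
product of its bands as soon as the non-center letters multiply to `1`. For `12n157` they spell
`σ₂⁻¹ σ₂ σ₂ σ₃⁻¹ σ₃ σ₂⁻¹`, which cancels already in the free group, and every center carries a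
positive generator. -/

namespace BandDecomposition

variable {m : ℕ} {w : List (Letter m)} {S : List ℕ} {p : ℕ}

theorem wordProd_append (w v : List (Letter m)) : wordProd (w ++ v) = wordProd w * wordProd v := by
  simp [wordProd]

def conjugatorLetters (w : List (Letter m)) (S : List ℕ) (p : ℕ) : List (Letter m) :=
  ((w.zipIdx.map Prod.swap).filter fun qx => decide (qx.1 + 1 < p ∧ qx.1 + 1 ∉ S)).map Prod.snd

theorem band_def :
    band w S p = match w[p - 1]? with
      | some x => wordProd (conjugatorLetters w S p) * letterEl x *
          (wordProd (conjugatorLetters w S p))⁻¹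
      | none => 1 :=
  rfl

theorem band_of_getElem?_eq_some {x : Letter m} (h : w[p - 1]? = some x) :
    band w S p = wordProd (conjugatorLetters w S p) * letterEl x *
      (wordProd (conjugatorLetters w S p))⁻¹ := by
  rw [band_def, h]

theorem band_of_length_lt (h : w.length < p) : band w S p = 1 := by
  rw [band_def, List.getElem?_eq_none (by omega)]

theorem conjugatorLetters_append_of_le (v : List (Letter m)) (hp : p ≤ w.length + 1) :
    conjugatorLetters (w ++ v) S p = conjugatorLetters w S p := by
  have hv : ((v.zipIdx (0 + w.length)).map Prod.swap).filter
      (fun qx => decide (qx.1 + 1 < p ∧ qx.1 + 1 ∉ S)) = [] := by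
    refine List.filter_eq_nil_iff.2 fun ⟨q, x⟩ hqx => ?_
    obtain ⟨⟨x', q'⟩, hmem, hswap⟩ := List.mem_map.1 hqx
    cases hswap
    have := (List.mem_zipIdx hmem).1
    simp only [decide_eq_true_eq, not_and]
    omega
  simp only [conjugatorLetters, List.zipIdx_append, List.map_append, List.filter_append, hv,
    List.append_nil]

theorem conjugatorLetters_append_singleton (x : Letter m) :
    conjugatorLetters (w ++ [x]) S (w.length + 2) =
      conjugatorLetters w S (w.length + 1) ++ if w.length + 1 ∈ S then [] else [x] := by
  have hw : ((w.zipIdx.map Prod.swap).filter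
        fun qx => decide (qx.1 + 1 < w.length + 2 ∧ qx.1 + 1 ∉ S)) =
      (w.zipIdx.map Prod.swap).filter fun qx => decide (qx.1 + 1 < w.length + 1 ∧ qx.1 + 1 ∉ S) := by
    refine List.filter_congr fun ⟨q, x⟩ hqx => ?_
    obtain ⟨⟨x', q'⟩, hmem, hswap⟩ := List.mem_map.1 hqx
    cases hswap
    have := (List.mem_zipIdx hmem).2.1
    simp only [decide_eq_decide]
    exact and_congr_left fun _ => by omega
  simp only [conjugatorLetters, List.zipIdx_append, List.zipIdx_singleton, List.map_append,
    List.filter_append, hw]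
  by_cases hS : w.length + 1 ∈ S <;> simp [hS]

theorem band_append_singleton_of_ne (x : Letter m) (hp0 : p ≠ 0) (hpn : p ≠ w.length + 1) :
    band (w ++ [x]) S p = band w S p := by
  rcases Nat.lt_or_gt_of_ne hpn with hp | hp
  · rw [band_def, band_def, List.getElem?_append_left (by omega),
      conjugatorLetters_append_of_le _ (by omega)]
  · rw [band_of_length_lt (by simp; omega), band_of_length_lt (by omega)]

theorem bandProd_append_singleton (hS : S.Pairwise (· < ·)) (h0 : 0 ∉ S) (x : Letter m) :
    bandProd (w ++ [x]) S =
      bandProd w S * if w.length + 1 ∈ S then band (w ++ [x]) S (w.length + 1) else 1 := by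
  split_ifs with hn
  · obtain ⟨A, B, rfl⟩ := List.append_of_mem hn
    obtain ⟨-, hB, hAB⟩ := List.pairwise_append.1 hS
    have hlt : ∀ a ∈ A, a < w.length + 1 := fun a ha => hAB a ha _ List.mem_cons_self
    have hgt : ∀ b ∈ B, w.length + 1 < b := fun _ hb => List.rel_of_pairwise_cons hB hb
    have hA' : A.map (band (w ++ [x]) (A ++ (w.length + 1) :: B)) =
        A.map (band w (A ++ (w.length + 1) :: B)) :=
      List.map_congr_left fun a ha => band_append_singleton_of_ne x
        (fun h => h0 (h ▸ List.mem_append_left _ ha)) (hlt a ha).ne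
    have hB' : ∀ v : List (Letter m), v.length ≤ w.length + 1 →
        (B.map (band v (A ++ (w.length + 1) :: B))).prod = 1 := fun v hv =>
      List.prod_eq_one fun g hg => by
        obtain ⟨b, hb, rfl⟩ := List.mem_map.1 hg
        exact band_of_length_lt (by have := hgt b hb; omega)
    simp only [bandProd, List.map_append, List.map_cons, List.prod_append, List.prod_cons, hA',
      hB' w (by omega), hB' (w ++ [x]) (by simp), band_of_length_lt (Nat.lt_succ_self _),
      mul_one]
  · rw [mul_one, bandProd, bandProd, List.map_congr_left fun p hp => band_append_singleton_of_ne x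
      (fun h => h0 (h ▸ hp)) (fun h => hn (h ▸ hp))]

-- `0 ∉ S` matters: `band w S 0` reads `w[0 - 1]? = w[0]?`.
theorem bandProd_mul_wordProd_conjugatorLetters (hS : S.Pairwise (· < ·)) (h0 : 0 ∉ S)
    (w : List (Letter m)) :
    bandProd w S * wordProd (conjugatorLetters w S (w.length + 1)) = wordProd w := by
  induction w using List.reverseRecOn with
  | nil =>
    have hbands : bandProd ([] : List (Letter m)) S = 1 := List.prod_eq_one fun g hg => by
      obtain ⟨p, hp, rfl⟩ := List.mem_map.1 hg
      exact band_of_length_lt (Nat.pos_of_ne_zero fun h => h0 (h ▸ hp))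
    simp [hbands, conjugatorLetters, wordProd]
  | append_singleton w x ih =>
    rw [List.length_append, List.length_singleton, conjugatorLetters_append_singleton,
      bandProd_append_singleton hS h0, wordProd_append, wordProd_append, ← ih]
    split_ifs with hn
    · rw [band_of_getElem?_eq_some (x := x) (by simp), conjugatorLetters_append_of_le _ le_rfl]
      simp only [wordProd, List.map_cons, List.map_nil, List.prod_cons, List.prod_nil]
      group
    · simp only [wordProd, List.map_cons, List.map_nil, List.prod_cons, List.prod_nil, mul_one,
        mul_assoc]

theorem wordProd_eq_bandProd (hS : S.Pairwise (· < ·)) (h0 : 0 ∉ S)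
    (hcancel : wordProd (conjugatorLetters w S (w.length + 1)) = 1) :
    wordProd w = bandProd w S := by
  rw [← bandProd_mul_wordProd_conjugatorLetters hS h0 w, hcancel, mul_one]

theorem isPositiveBand_band {j : Fin m} (h : w[p - 1]? = some (j, true)) :
    IsPositiveBand (band w S p) :=
  ⟨_, j, band_of_getElem?_eq_some h⟩

theorem isQuasipositive_bandProd (h : ∀ p ∈ S, ∃ j, w[p - 1]? = some (j, true)) :
    IsQuasipositive (bandProd w S) := by
  refine ⟨S.map (band w S), fun b hb => ?_, rfl⟩
  obtain ⟨p, hp, rfl⟩ := List.mem_map.1 hb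
  obtain ⟨j, hj⟩ := h p hp
  exact isPositiveBand_band hj

end BandDecomposition

open BandDecomposition in
/-- The braid representative of `12n157` equals the product of the bands of its
band decomposition with the given band centers; in particular it is quasipositive. -/
theorem knot_12n157_quasipositive :
    wordProd theWord = bandProd theWord theCenters ∧
      IsQuasipositive (wordProd theWord) := by
  have hletters : conjugatorLetters theWord theCenters (theWord.length + 1) =
      [(1, false), (1, true), (1, true), (2, false), (2, true), (1, false)] := by
    decide
  have hcancel : wordProd (conjugatorLetters theWord theCenters (theWord.length + 1)) = 1 := by
    rw [hletters]
    simp only [wordProd, letterEl, Bool.false_eq_true, ↓reduceIte, List.map_cons, List.map_nil,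
      List.prod_cons, List.prod_nil]
    group
  have hdecomp := wordProd_eq_bandProd (by decide) (by decide) hcancel
  exact ⟨hdecomp, hdecomp ▸ isQuasipositive_bandProd (by decide)⟩
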